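/- Let G be a finite group with V_k = 1 and suppose G_k is H_1 (so cl(x) = xG_k for all x ∈ G_{k-1} \ V_{k-1}). Then every irreducible character of G whose kernel does not contain G_k vanishes on G_{k-1} \ V_{k-1}. -/

import Mathlib

open Subgroup
open scoped Pointwise

/-- The vanishing-off subgroup `V(G)`: generated by all `g` at which some
nonlinear irreducible character does not vanish. -/
def vanishingOff (G : Type) [Group G] : Subgroup G :=
  Subgroup.closure {g | ∃ V : FDRep ℂ G, CategoryTheory.Simple V ∧
    1 < Module.finrank ℂ V ∧ FDRep.character V g ≠ 0}

instance vanishingOff_normal (G : Type) [Group G] : (vanishingOff G).Normal := by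
  constructor
  intro n hn g
  have hset : ∀ x ∈ {g | ∃ V : FDRep ℂ G, CategoryTheory.Simple V ∧
      1 < Module.finrank ℂ V ∧ FDRep.character V g ≠ 0}, ∀ h : G,
      h * x * h⁻¹ ∈ vanishingOff G := by
    intro x hx h
    apply Subgroup.subset_closure
    obtain ⟨V, h1, h2, h3⟩ := hx
    exact ⟨V, h1, h2, by rwa [FDRep.char_conj]⟩
  induction hn using Subgroup.closure_induction with
  | mem x hx => exact hset x hx g
  | one => simpa using (vanishingOff G).one_mem
  | mul x y _ _ hx hy =>
      have : g * (x * y) * g⁻¹ = (g * x * g⁻¹) * (g * y * g⁻¹) := by group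
      rw [this]; exact mul_mem hx hy
  | inv x _ hx =>
      have : g * x⁻¹ * g⁻¹ = (g * x * g⁻¹)⁻¹ := by group
      rw [this]; exact inv_mem hx

/-- `paperV G i` is `V_i` : `V_1 = V(G)`, `V_i = [V_{i-1}, G]`. -/
def paperV (G : Type) [Group G] : ℕ → Subgroup G
  | 0 => ⊤
  | 1 => vanishingOff G
  | (n+2) => ⁅paperV G (n+1), (⊤ : Subgroup G)⁆

instance paperV_normal (G : Type) [Group G] (i : ℕ) : (paperV G i).Normal := by
  induction i with
  | zero => exact inferInstanceAs (⊤ : Subgroup G).Normal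
  | succ n ih =>
    match n, ih with
    | 0, _ => exact inferInstanceAs (vanishingOff G).Normal
    | (m+1), ih => exact Subgroup.commutator_normal _ _

/-- `paperLCS G i` is `G_i`, the `i`-th term of the lower central series with
the paper's indexing: `G_1 = G`, `G_{i+1} = [G_i, G]`. -/
def paperLCS (G : Type) [Group G] (i : ℕ) : Subgroup G := (⊤ : Subgroup G).lowerCentralSeries (i - 1)

instance paperLCS_normal (G : Type) [Group G] (i : ℕ) : (paperLCS G i).Normal :=
  inferInstanceAs ((⊤ : Subgroup G).lowerCentralSeries (i - 1)).Normal

/-- `Y_i`, defined by `Y_i/V_i = Z(G/V_i)`. -/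
def paperY (G : Type) [Group G] (i : ℕ) : Subgroup G :=
  (Subgroup.center (G ⧸ paperV G i)).comap (QuotientGroup.mk' (paperV G i))

instance paperY_normal (G : Type) [Group G] (i : ℕ) : (paperY G i).Normal :=
  Subgroup.Normal.comap inferInstance _

/-- `D_i`, defined by `D_i/V_i = C_{G/V_i}(G_{i-1}/V_i)`. -/
def paperD (G : Type) [Group G] (i : ℕ) : Subgroup G :=
  (Subgroup.centralizer (((paperLCS G (i-1)).map (QuotientGroup.mk' (paperV G i))) :
      Set (G ⧸ paperV G i))).comap (QuotientGroup.mk' (paperV G i))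

instance paperLCSinfY_normal (G : Type) [Group G] (i j : ℕ) :
    (paperLCS G i ⊓ paperY G j).Normal := Subgroup.normal_inf_normal _ _

/-- `E_i`, defined by `E_i/(G_{i-1} ∩ Y_i) = C_{G/(G_{i-1} ∩ Y_i)}(G_{i-2}/(G_{i-1} ∩ Y_i))`. -/
def paperE (G : Type) [Group G] (i : ℕ) : Subgroup G :=
  (Subgroup.centralizer (((paperLCS G (i-2)).map
      (QuotientGroup.mk' (paperLCS G (i-1) ⊓ paperY G i))) :
      Set (G ⧸ (paperLCS G (i-1) ⊓ paperY G i)))).comap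
    (QuotientGroup.mk' (paperLCS G (i-1) ⊓ paperY G i))

/-- `G_i` is `H_1`: for every normal `N` with `V_i ≤ N < G_i`,
`V_{i-1}/N = (G_{i-1}/N) ∩ Z(G/N)`. -/
def IsH1 (G : Type) [Group G] (i : ℕ) : Prop :=
  ∀ (N : Subgroup G) (hN : N.Normal), paperV G i ≤ N → N < paperLCS G i →
    letI := hN
    (paperV G (i-1)).map (QuotientGroup.mk' N) =
      (paperLCS G (i-1)).map (QuotientGroup.mk' N) ⊓ Subgroup.center (G ⧸ N)

open CategoryTheory Module
open scoped commutatorElement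

noncomputable section AuxProof

variable {G : Type} [Group G]

def fdRes (W : FDRep ℂ G) (p : Submodule ℂ W) (hp : ∀ g : G, ∀ v ∈ p, W.ρ g v ∈ p) :
    FDRep ℂ G :=
  FDRep.of {
    toFun := fun g => (W.ρ g).restrict (fun v hv => hp g v hv)
    map_one' := by ext v; simp [LinearMap.restrict_apply]
    map_mul' := fun g h => by ext v; simp [LinearMap.restrict_apply] }

def fdResι (W : FDRep ℂ G) (p : Submodule ℂ W) (hp : ∀ g : G, ∀ v ∈ p, W.ρ g v ∈ p) :
    fdRes W p hp ⟶ W where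
  hom := FGModuleCat.ofHom p.subtype
  comm := fun g => by ext v; rfl

/-- Hom of FDRep morphisms are equivariant. -/
lemma fd_hom_comm {X Y : FDRep ℂ G} (f : X ⟶ Y) (g : G) (v : X) :
    f.hom (X.ρ g v) = Y.ρ g (f.hom v) :=
  congrFun (congrArg (fun (l : X.V ⟶ Y.V) => (l : X → Y)) (f.comm g)) v

/-- If `W` is simple, every invariant submodule is trivial. -/
lemma invariant_eq_bot_or_top (W : FDRep ℂ G) [Simple W] (p : Submodule ℂ W)
    (hp : ∀ g : G, ∀ v ∈ p, W.ρ g v ∈ p) : p = ⊥ ∨ p = ⊤ := by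
  by_cases hbot : p = ⊥
  · exact Or.inl hbot
  right
  obtain ⟨x, hxp, hx0⟩ := Submodule.exists_mem_ne_zero_of_ne_bot hbot
  set ι := fdResι W p hp
  have hmono : Mono ι := by
    constructor
    intro Z a b w
    ext z
    have := congrFun (congrArg (fun (l : Action.Hom Z W) => ((l.hom.hom.hom : Z →ₗ[ℂ] W) : Z → W)) w) z
    exact Subtype.ext this
  have hne : ι ≠ 0 := by
    intro h0
    have : ι.hom ⟨x, hxp⟩ = (0 : W) := by rw [h0]; rfl
    exact hx0 this
  have hiso : IsIso ι := (Simple.mono_isIso_iff_nonzero ι).mpr hne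
  have hsurj : ∀ w : W, ∃ v : p, (v : W) = w := by
    intro w
    refine ⟨(inv ι).hom w, ?_⟩
    have := congrFun (congrArg (fun (l : Action.Hom W W) => ((l.hom.hom.hom : W →ₗ[ℂ] W) : W → W))
      (IsIso.inv_hom_id ι)) w
    exact this
  rw [Submodule.eq_top_iff']
  intro w
  obtain ⟨v, hv⟩ := hsurj w
  exact hv ▸ v.2

lemma nontrivial_of_simple (W : FDRep ℂ G) [Simple W] : Nontrivial W := by
  by_contra h
  rw [not_nontrivial_iff_subsingleton] at h
  apply id_nonzero W
  ext v
  exact @Subsingleton.elim _ h _ _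

/-- Converse: no nontrivial invariant submodules implies simple. -/
lemma simple_of_invariant (W : FDRep ℂ G) (hnt : Nontrivial W)
    (h : ∀ p : Submodule ℂ W, (∀ g : G, ∀ v ∈ p, W.ρ g v ∈ p) → p = ⊥ ∨ p = ⊤) :
    Simple W := by
  constructor
  intro Y f hmono
  constructor
  · intro hiso h0
    have : 𝟙 W = (0 : W ⟶ W) := by
      have h1 : 𝟙 W = inv f ≫ f := (IsIso.inv_hom_id f).symm
      have h2 : inv f ≫ f = inv f ≫ (0 : Y ⟶ W) := congrArg (fun t => inv f ≫ t) h0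
      rw [Limits.comp_zero] at h2
      exact h1.trans h2
    obtain ⟨a, b, hab⟩ := hnt
    apply hab
    have ha := congrFun (congrArg (fun (l : Action.Hom W W) => ((l.hom.hom.hom : W →ₗ[ℂ] W) : W → W)) this) a
    have hb := congrFun (congrArg (fun (l : Action.Hom W W) => ((l.hom.hom.hom : W →ₗ[ℂ] W) : W → W)) this) b
    simpa using ha.trans hb.symm
  · intro hne
    -- range is invariant and nonzero hence ⊤; kernel is invariant, and killed by mono.
    have hcomm : ∀ (g : G) (v : Y), f.hom.hom.hom (Y.ρ g v) = W.ρ g (f.hom.hom.hom v) := fun g v =>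
      congrFun (congrArg (fun (l : Y.V ⟶ W.V) => (l : Y → W)) (f.comm g)) v
    have hrange : LinearMap.range (f.hom.hom.hom : Y →ₗ[ℂ] W) = ⊤ := by
      have hinv : ∀ g : G, ∀ v ∈ LinearMap.range (f.hom.hom.hom : Y →ₗ[ℂ] W),
          W.ρ g v ∈ LinearMap.range (f.hom.hom.hom : Y →ₗ[ℂ] W) := by
        rintro g v ⟨y, rfl⟩
        exact ⟨Y.ρ g y, hcomm g y⟩
      rcases h _ hinv with hb | ht
      · exfalso
        apply hne
        ext y
        have : f.hom.hom.hom y ∈ LinearMap.range (f.hom.hom.hom : Y →ₗ[ℂ] W) := ⟨y, rfl⟩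
        rw [hb] at this
        simpa using this
      · exact ht
    have hker : LinearMap.ker (f.hom.hom.hom : Y →ₗ[ℂ] W) = ⊥ := by
      set K := LinearMap.ker (f.hom.hom.hom : Y →ₗ[ℂ] W)
      have hKinv : ∀ g : G, ∀ v ∈ K, Y.ρ g v ∈ K := by
        intro g v hv
        have : f.hom.hom.hom (Y.ρ g v) = 0 := by
          rw [hcomm g v]
          rw [LinearMap.mem_ker] at hv
          rw [hv, map_zero]
        exact LinearMap.mem_ker.mpr this
      set j := fdResι Y K hKinv
      have hj : j ≫ f = (0 : fdRes Y K hKinv ⟶ W) := by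
        ext z
        exact z.2
      have hj0 : j = (0 : fdRes Y K hKinv ⟶ Y) := by
        have : j ≫ f = (0 : fdRes Y K hKinv ⟶ Y) ≫ f := by rw [hj]; simp
        exact Mono.right_cancellation _ _ this
      rw [Submodule.eq_bot_iff]
      intro v hv
      have := congrFun (congrArg
        (fun (l : Action.Hom (fdRes Y K hKinv) Y) => ((l.hom.hom.hom : K →ₗ[ℂ] Y) : K → Y)) hj0) ⟨v, hv⟩
      exact this
    -- build the inverse
    have hbij : Function.Bijective (f.hom.hom.hom : Y →ₗ[ℂ] W) :=
      ⟨LinearMap.ker_eq_bot.mp hker, LinearMap.range_eq_top.mp hrange⟩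
    set e := LinearEquiv.ofBijective (f.hom.hom.hom : Y →ₗ[ℂ] W) hbij
    refine ⟨⟨⟨FGModuleCat.ofHom e.symm.toLinearMap, ?_⟩, ?_, ?_⟩⟩
    · intro g
      ext w
      apply e.injective
      show e (e.symm (W.ρ g w)) = e (Y.ρ g (e.symm w))
      rw [e.apply_symm_apply]
      show _ = f.hom.hom.hom (Y.ρ g (e.symm w))
      rw [hcomm g (e.symm w)]
      congr 1
      exact (e.apply_symm_apply w).symm
    · ext y
      show e.symm (f.hom y) = y
      exact e.symm_apply_apply y
    · ext w
      show f.hom (e.symm w) = w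
      exact e.apply_symm_apply w

lemma exists_invariant_compl [Fintype G] (W : FDRep ℂ G) (p : Submodule ℂ W)
    (hp : ∀ g : G, ∀ v ∈ p, W.ρ g v ∈ p) :
    ∃ q : Submodule ℂ W, (∀ g : G, ∀ v ∈ q, W.ρ g v ∈ q) ∧ IsCompl p q := by
  obtain ⟨p', hp'⟩ := p.exists_isCompl
  set π0 : W →ₗ[ℂ] W := p.subtype ∘ₗ p.projectionOnto p' hp' with hπ0
  have hπ0_mem : ∀ v : W, π0 v ∈ p := fun v => (p.projectionOnto p' hp' v).2
  have hπ0_id : ∀ v ∈ p, π0 v = v := by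
    intro v hv
    show (p.subtype) (p.projectionOnto p' hp' v) = v
    rw [show v = ((⟨v, hv⟩ : p) : W) from rfl, Submodule.projectionOnto_apply_left hp']
    rfl
  set c : ℂ := (Fintype.card G : ℂ)⁻¹ with hc
  have hcard : (Fintype.card G : ℂ) ≠ 0 := Nat.cast_ne_zero.mpr Fintype.card_ne_zero
  set e : W →ₗ[ℂ] W := c • ∑ g : G, ((W.ρ g⁻¹) ∘ₗ π0 ∘ₗ (W.ρ g)) with he
  have he_apply : ∀ v : W, e v = c • ∑ g : G, W.ρ g⁻¹ (π0 (W.ρ g v)) := by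
    intro v
    rw [he]
    simp [LinearMap.sum_apply]
  have he_mem : ∀ v : W, e v ∈ p := by
    intro v
    rw [he_apply]
    refine Submodule.smul_mem _ _ (Submodule.sum_mem _ fun g _ => ?_)
    exact hp g⁻¹ _ (hπ0_mem _)
  have he_id : ∀ v ∈ p, e v = v := by
    intro v hv
    rw [he_apply]
    have hterm : ∀ g : G, W.ρ g⁻¹ (π0 (W.ρ g v)) = v := by
      intro g
      rw [hπ0_id _ (hp g v hv), ← Module.End.mul_apply, ← map_mul, inv_mul_cancel, map_one]
      rfl
    simp only [hterm]
    rw [Finset.sum_const, Finset.card_univ, ← Nat.cast_smul_eq_nsmul ℂ, smul_smul, hc,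
      inv_mul_cancel₀ hcard, one_smul]
  have he_comm : ∀ (h : G) (v : W), e (W.ρ h v) = W.ρ h (e v) := by
    intro h v
    rw [he_apply, he_apply, map_smul, map_sum]
    congr 1
    have key : ∀ g : G, W.ρ g⁻¹ (π0 (W.ρ g (W.ρ h v)))
        = W.ρ h (W.ρ (g*h)⁻¹ (π0 (W.ρ (g*h) v))) := by
      intro g
      have e1 : W.ρ g (W.ρ h v) = W.ρ (g*h) v := by
        rw [map_mul]; rfl
      have e2 : W.ρ h (W.ρ (g*h)⁻¹ (π0 (W.ρ (g*h) v))) = W.ρ g⁻¹ (π0 (W.ρ (g*h) v)) := by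
        rw [← Module.End.mul_apply, ← map_mul, mul_inv_rev, ← mul_assoc, mul_inv_cancel, one_mul]
      rw [e1, e2]
    rw [Finset.sum_congr rfl (fun g _ => key g)]
    exact Fintype.sum_equiv (Equiv.mulRight h)
      (fun g => W.ρ h (W.ρ (g*h)⁻¹ (π0 (W.ρ (g*h) v))))
      (fun g => W.ρ h (W.ρ g⁻¹ (π0 (W.ρ g v)))) (fun g => rfl)
  refine ⟨LinearMap.ker e, ?_, ?_, ?_⟩
  · intro g v hv
    rw [LinearMap.mem_ker] at hv ⊢
    rw [he_comm g v, hv, map_zero]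
  · rw [Submodule.disjoint_def]
    intro v hvp hvk
    rw [LinearMap.mem_ker] at hvk
    rw [← he_id v hvp, hvk]
  · rw [codisjoint_iff, Submodule.eq_top_iff']
    intro v
    have h1 : e v ∈ p := he_mem v
    have h2 : v - e v ∈ LinearMap.ker e := by
      rw [LinearMap.mem_ker, map_sub, he_id _ (he_mem v), sub_self]
    have : v = e v + (v - e v) := by rw [add_sub_cancel]
    rw [this]
    exact Submodule.add_mem_sup h1 h2

lemma detect_aux [Fintype G] : ∀ n : ℕ, ∀ W : FDRep ℂ G, finrank ℂ W ≤ n →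
    ∀ h : G, W.ρ h ≠ 1 → ∃ S : FDRep ℂ G, Simple S ∧ S.ρ h ≠ 1 := by
  intro n
  induction n with
  | zero =>
    intro W hn h hh
    exfalso
    apply hh
    have : Subsingleton W := by
      rw [← Module.finrank_zero_iff (R := ℂ)]
      omega
    ext v
    exact @Subsingleton.elim _ this _ _
  | succ n ih =>
    intro W hn h hh
    by_cases htriv : ∀ p : Submodule ℂ W, (∀ g : G, ∀ v ∈ p, W.ρ g v ∈ p) → p = ⊥ ∨ p = ⊤
    · refine ⟨W, ?_, hh⟩
      apply simple_of_invariant W ?_ htriv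
      by_contra hnt
      rw [not_nontrivial_iff_subsingleton] at hnt
      apply hh
      ext v
      exact @Subsingleton.elim _ hnt _ _
    · push_neg at htriv
      obtain ⟨p, hpinv, hpbot, hptop⟩ := htriv
      obtain ⟨q, hqinv, hcompl⟩ := exists_invariant_compl W p hpinv
      have hqtop : q ≠ ⊤ := by
        intro hq
        apply hpbot
        rw [hq] at hcompl
        exact disjoint_top.mp hcompl.disjoint
      -- h moves some vector; it lives in p + q
      obtain ⟨v, hv⟩ : ∃ v : W, W.ρ h v ≠ v := by
        by_contra hc
        push_neg at hc
        exact hh (by ext v; simpa using hc v)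
      have hvsup : v ∈ p ⊔ q := by rw [hcompl.sup_eq_top]; trivial
      obtain ⟨a, ha, b, hb, rfl⟩ := Submodule.mem_sup.mp hvsup
      have : W.ρ h a ≠ a ∨ W.ρ h b ≠ b := by
        by_contra hc
        push_neg at hc
        apply hv
        rw [map_add, hc.1, hc.2]
      -- helper to recurse into an invariant proper submodule containing a moved vector
      have hrec : ∀ (r : Submodule ℂ W) (hr : ∀ g : G, ∀ v ∈ r, W.ρ g v ∈ r), r ≠ ⊤ →
          ∀ a ∈ r, W.ρ h a ≠ a → ∃ S : FDRep ℂ G, Simple S ∧ S.ρ h ≠ 1 := by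
        intro r hr hrtop a har hmoved
        have hlt : finrank ℂ r < finrank ℂ W :=
          Submodule.finrank_lt hrtop
        refine ih (fdRes W r hr) ?_ h ?_
        · have : finrank ℂ (fdRes W r hr) = finrank ℂ r := rfl
          omega
        · intro h1
          apply hmoved
          have h1' : ((W.ρ h).restrict (fun v hv => hr h v hv)) = (1 : r →ₗ[ℂ] r) := h1
          have h2 := congrFun (congrArg (fun (l : r →ₗ[ℂ] r) => (l : r → r)) h1') ⟨a, har⟩
          have h3 : (((W.ρ h).restrict (fun v hv => hr h v hv)) ⟨a, har⟩ : W) = a :=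
            congrArg Subtype.val h2
          rwa [LinearMap.restrict_apply] at h3
      rcases this with hmove | hmove
      · exact hrec p hpinv hptop a ha hmove
      · exact hrec q hqinv hqtop b hb hmove

lemma exists_simple_detect [Fintype G] (W : FDRep ℂ G) (h : G) (hh : W.ρ h ≠ 1) :
    ∃ S : FDRep ℂ G, Simple S ∧ S.ρ h ≠ 1 :=
  detect_aux (finrank ℂ W) W le_rfl h hh

/-- The left regular representation detects every nonidentity element. -/
lemma regular_detects [Fintype G] (h : G) (hh : h ≠ 1) :
    ∃ S : FDRep ℂ G, Simple S ∧ S.ρ h ≠ 1 := by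
  have : FiniteDimensional ℂ (MonoidAlgebra ℂ G) := by infer_instance
  set W : FDRep ℂ G := FDRep.of (Representation.ofMulAction ℂ G G)
  refine exists_simple_detect W h ?_
  intro h1
  have := congrFun (congrArg (fun (l : W →ₗ[ℂ] W) => (l : W → W)) h1)
    (MonoidAlgebra.single (1 : G) (1 : ℂ))
  have h2 : (Representation.ofMulAction ℂ G G) h (MonoidAlgebra.single (1 : G) (1 : ℂ))
      = MonoidAlgebra.single (1 : G) (1 : ℂ) := this
  rw [Representation.ofMulAction_single] at h2
  have h4 := (MonoidAlgebra.single_left_inj (one_ne_zero (α := ℂ))).mp h2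
  apply hh
  simpa using h4

/-- On a space of dimension ≤ 1, all endomorphisms commute. -/
lemma end_commute_of_finrank_le_one {V : Type} [AddCommGroup V] [Module ℂ V]
    [FiniteDimensional ℂ V] (hd : finrank ℂ V ≤ 1) (f g : V →ₗ[ℂ] V) :
    f ∘ₗ g = g ∘ₗ f := by
  rcases Nat.lt_or_ge (finrank ℂ V) 1 with h0 | h1
  · have : Subsingleton V := by
      rw [← Module.finrank_zero_iff (R := ℂ)]; omega
    ext v; exact @Subsingleton.elim _ this _ _
  · have hd1 : finrank ℂ V = 1 := le_antisymm hd h1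
    obtain ⟨v, hv0, hvs⟩ := finrank_eq_one_iff'.mp hd1
    ext w
    obtain ⟨cw, hcw⟩ := hvs w
    obtain ⟨cf, hcf⟩ := hvs (f v)
    obtain ⟨cg, hcg⟩ := hvs (g v)
    simp only [LinearMap.comp_apply, ← hcw, map_smul, ← hcf, ← hcg, smul_smul]
    congr 1
    ring

lemma exists_nonlinear_simple [Fintype G] (hna : ∃ a b : G, a * b ≠ b * a) :
    ∃ S : FDRep ℂ G, Simple S ∧ 1 < finrank ℂ S := by
  obtain ⟨a, b, hab⟩ := hna
  set c := ⁅a, b⁆ with hcdef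
  have hc : c ≠ 1 := by
    intro h
    exact hab (commutatorElement_eq_one_iff_mul_comm.mp h)
  obtain ⟨S, hS, hSc⟩ := regular_detects c hc
  refine ⟨S, hS, ?_⟩
  by_contra hles
  push_neg at hles
  apply hSc
  have hcomm : ∀ f g : S →ₗ[ℂ] S, f ∘ₗ g = g ∘ₗ f :=
    end_commute_of_finrank_le_one hles
  have : S.ρ c = S.ρ a * S.ρ b * S.ρ a⁻¹ * S.ρ b⁻¹ := by
    rw [hcdef, commutatorElement_def]; simp [map_mul]
  rw [this]
  have h1 : S.ρ b * S.ρ a⁻¹ = S.ρ a⁻¹ * S.ρ b := hcomm _ _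
  rw [mul_assoc (S.ρ a), h1, ← mul_assoc, ← map_mul, mul_inv_cancel, map_one, one_mul, ← map_mul,
    mul_inv_cancel, map_one]

/-- The one-dimensional trivial representation. -/
def trivRep (H : Type) [Group H] : FDRep ℂ H := FDRep.of (1 : Representation ℂ H ℂ)

lemma trivRep_simple (H : Type) [Group H] : Simple (trivRep H) := by
  apply simple_of_invariant _ (inferInstanceAs (Nontrivial ℂ))
  intro p _
  exact IsSimpleOrder.eq_bot_or_eq_top (α := Submodule ℂ ℂ) p

lemma trivRep_character (H : Type) [Group H] (h : H) : (trivRep H).character h = 1 := by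
  have h1 : (trivRep H).ρ h = LinearMap.id := rfl
  simp only [FDRep.character, h1, LinearMap.trace_id]
  exact_mod_cast congrArg (Nat.cast (R := ℂ)) (Module.finrank_self ℂ)

lemma trivRep_finrank (H : Type) [Group H] : finrank ℂ (trivRep H) = 1 :=
  Module.finrank_self ℂ

section Lift
variable {H : Type} [Group H] (π : G →* H)

/-- Pull back a representation along a homomorphism. -/
def liftRep (ψ : FDRep ℂ H) : FDRep ℂ G := FDRep.of (ψ.ρ.comp π)

lemma liftRep_character (ψ : FDRep ℂ H) (g : G) :
    (liftRep π ψ).character g = ψ.character (π g) := rfl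

lemma liftRep_finrank (ψ : FDRep ℂ H) : finrank ℂ (liftRep π ψ) = finrank ℂ ψ := rfl

lemma liftRep_simple (hsurj : Function.Surjective π) (ψ : FDRep ℂ H) [Simple ψ] :
    Simple (liftRep π ψ) := by
  refine simple_of_invariant (liftRep π ψ) (nontrivial_of_simple ψ) ?_
  intro p hp
  refine invariant_eq_bot_or_top ψ p ?_
  intro h v hv
  obtain ⟨g, rfl⟩ := hsurj h
  exact hp g v hv
end Lift

/-- A nonlinear simple character vanishes off `V(G)`. -/
lemma char_eq_zero_of_not_mem_vanishingOff (W : FDRep ℂ G) [Simple W]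
    (hd : 1 < finrank ℂ W) {g : G} (hg : g ∉ vanishingOff G) : W.character g = 0 := by
  by_contra h
  exact hg (Subgroup.subset_closure ⟨W, inferInstance, hd, h⟩)

theorem commutator_le_vanishingOff (G : Type) [Group G] [Finite G] :
    ⁅(⊤ : Subgroup G), (⊤ : Subgroup G)⁆ ≤ vanishingOff G := by
  set Vg := vanishingOff G with hVg
  rw [Subgroup.commutator_le]
  intro a _ b _
  suffices habel : ∀ x y : G ⧸ Vg, x * y = y * x by
    have h1 : ((⁅a, b⁆ : G) : G ⧸ Vg) = 1 := by
      have : ((⁅a, b⁆ : G) : G ⧸ Vg) = ⁅(a : G ⧸ Vg), (b : G ⧸ Vg)⁆ := by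
        rw [commutatorElement_def, commutatorElement_def]
        rfl
      rw [this, commutatorElement_eq_one_iff_mul_comm]
      exact habel _ _
    exact (QuotientGroup.eq_one_iff _).mp h1
  by_contra hna
  push_neg at hna
  letI : Fintype (G ⧸ Vg) := Fintype.ofFinite _
  obtain ⟨ψ, hψs, hψd⟩ := exists_nonlinear_simple (G := G ⧸ Vg) (by
    obtain ⟨x, y, hxy⟩ := hna; exact ⟨x, y, hxy⟩)
  haveI := hψs
  set π := QuotientGroup.mk' Vg
  have hsurj : Function.Surjective π := QuotientGroup.mk'_surjective Vg
  haveI hWs : Simple (liftRep π ψ) := liftRep_simple π hsurj ψ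
  -- ψ vanishes away from 1
  have hvanish : ∀ h : G ⧸ Vg, h ≠ 1 → ψ.character h = 0 := by
    intro h hne
    obtain ⟨g, rfl⟩ := hsurj h
    have hg : g ∉ Vg := by
      intro hmem
      exact hne ((QuotientGroup.eq_one_iff _).mpr hmem)
    have := char_eq_zero_of_not_mem_vanishingOff (liftRep π ψ)
      (by rw [liftRep_finrank]; exact hψd) (g := g) hg
    rwa [liftRep_character] at this
  -- orthogonality with the trivial representation
  haveI : Simple (trivRep (G ⧸ Vg)) := trivRep_simple (G ⧸ Vg)
  haveI : Invertible ((Fintype.card (G ⧸ Vg) : ℂ)) :=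
    invertibleOfNonzero (Nat.cast_ne_zero.mpr Fintype.card_ne_zero)
  letI : Invertible ((Nat.card (G ⧸ Vg) : ℂ)) :=
    invertibleOfNonzero (Nat.cast_ne_zero.mpr Nat.card_pos.ne')
  have horth := FDRep.char_orthonormal (k := ℂ) (G := G ⧸ Vg) ψ (trivRep (G ⧸ Vg))
  have hniso : ¬ Nonempty (ψ ≅ trivRep (G ⧸ Vg)) := by
    rintro ⟨i⟩
    have := FDRep.char_iso i
    have h1 := congrFun this 1
    rw [FDRep.char_one, FDRep.char_one, trivRep_finrank] at h1
    have : finrank ℂ ψ = 1 := by exact_mod_cast h1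
    omega
  rw [if_neg hniso] at horth
  have hzero : ∑ g : G ⧸ Vg, ψ.character g * (trivRep (G ⧸ Vg)).character g⁻¹ = 0 := by
    have := congrArg (fun z => (Nat.card (G ⧸ Vg) : ℂ) * z) horth
    simpa [smul_smul] using this
  rw [Finset.sum_eq_single (1 : G ⧸ Vg)] at hzero
  · rw [inv_one, trivRep_character, FDRep.char_one, mul_one] at hzero
    have : finrank ℂ ψ = 0 := by exact_mod_cast hzero
    omega
  · intro h _ hne
    rw [hvanish h hne, zero_mul]
  · intro habs
    exact absurd (Finset.mem_univ 1) habs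

/-- Lewis: `G_{n+2} ≤ V_{n+1}`. -/
lemma lcs_le_paperV (G : Type) [Group G] [Finite G] :
    ∀ n : ℕ, (⊤ : Subgroup G).lowerCentralSeries (n+1) ≤ paperV G (n+1) := by
  intro n
  induction n with
  | zero =>
    have h1 : (⊤ : Subgroup G).lowerCentralSeries 1 = ⁅(⊤ : Subgroup G), (⊤ : Subgroup G)⁆ := by
      rw [Subgroup.top_lowerCentralSeries_one, _root_.commutator]
    rw [h1]
    exact commutator_le_vanishingOff G
  | succ n ih =>
    have h1 : (⊤ : Subgroup G).lowerCentralSeries (n+2) = ⁅(⊤ : Subgroup G).lowerCentralSeries (n+1), (⊤ : Subgroup G)⁆ := rfl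
    have h2 : paperV G (n+2) = ⁅paperV G (n+1), (⊤ : Subgroup G)⁆ := rfl
    rw [h1, h2]
    exact Subgroup.commutator_mono ih le_rfl

end AuxProof

theorem stmt4 (G : Type) [Group G] [Finite G] (k : ℕ) (hk : 2 ≤ k)
    (hV : paperV G k = ⊥) (hH1 : IsH1 G k)
    (W : FDRep ℂ G) (hsimple : CategoryTheory.Simple W)
    (hker : ¬ ∀ g ∈ paperLCS G k, W.character g = W.character 1)
    (x : G) (hx : x ∈ paperLCS G (k-1)) (hx' : x ∉ paperV G (k-1)) :
    W.character x = 0 := by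
  haveI := hsimple
  push_neg at hker
  obtain ⟨z, hzGk, hzchar⟩ := hker
  -- Gk is central
  have hLCSk : (⊤ : Subgroup G).lowerCentralSeries (k-1+1) ≤ paperV G (k-1+1) := lcs_le_paperV G (k-1)
  have hk1 : k - 1 + 1 = k := by omega
  rw [hk1] at hLCSk
  have hlcsk_bot : (⊤ : Subgroup G).lowerCentralSeries k = ⊥ := le_bot_iff.mp (hV ▸ hLCSk)
  have hGkcent : ∀ z ∈ paperLCS G k, ∀ g : G, z * g = g * z := by
    intro z hz g
    have h1 : ⁅z, g⁆ ∈ (⊤ : Subgroup G).lowerCentralSeries (k-1+1) := by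
      show ⁅z, g⁆ ∈ ⁅(⊤ : Subgroup G).lowerCentralSeries (k-1), ⊤⁆
      exact Subgroup.commutator_mem_commutator hz (Subgroup.mem_top g)
    rw [hk1, hlcsk_bot, Subgroup.mem_bot] at h1
    exact commutatorElement_eq_one_iff_mul_comm.mp h1
  -- V_{k-1} is central
  have hVk : paperV G k = ⁅paperV G (k-1), (⊤ : Subgroup G)⁆ := by
    obtain ⟨m, rfl⟩ : ∃ m, k = m + 2 := ⟨k - 2, by omega⟩
    rfl
  have hVcent : ∀ v ∈ paperV G (k-1), ∀ g : G, v * g = g * v := by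
    intro v hv g
    have h1 : ⁅v, g⁆ ∈ paperV G k := by
      rw [hVk]
      exact Subgroup.commutator_mem_commutator hv (Subgroup.mem_top g)
    rw [hV, Subgroup.mem_bot] at h1
    exact commutatorElement_eq_one_iff_mul_comm.mp h1
  -- commutators of x land in (central) Gk
  have hxcomm : ∀ g : G, ⁅x, g⁆ ∈ paperLCS G k := by
    intro g
    have hx2 : x ∈ (⊤ : Subgroup G).lowerCentralSeries (k-2) := hx
    have h1 : ⁅x, g⁆ ∈ (⊤ : Subgroup G).lowerCentralSeries (k-2+1) := by
      show ⁅x, g⁆ ∈ ⁅(⊤ : Subgroup G).lowerCentralSeries (k-2), ⊤⁆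
      exact Subgroup.commutator_mem_commutator hx2 (Subgroup.mem_top g)
    have : k - 2 + 1 = k - 1 := by omega
    rw [this] at h1
    exact h1
  -- Gk ≠ ⊥
  have hGkne : paperLCS G k ≠ ⊥ := by
    intro hbot
    rw [hbot, Subgroup.mem_bot] at hzGk
    rw [hzGk] at hzchar
    exact hzchar rfl
  -- key : central elements of G_{k-1} lie in V_{k-1}
  have hinj : Function.Injective (QuotientGroup.mk' (⊥ : Subgroup G)) := by
    rw [← MonoidHom.ker_eq_bot_iff]
    exact QuotientGroup.ker_mk' ⊥
  have key : ∀ y, y ∈ paperLCS G (k-1) → (∀ g : G, y * g = g * y) → y ∈ paperV G (k-1) := by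
    intro y hy hyc
    have h0 := hH1 ⊥ inferInstance (le_of_eq hV) (bot_lt_iff_ne_bot.mpr hGkne)
    have h1 : (QuotientGroup.mk' ⊥) y ∈ (paperLCS G (k-1)).map (QuotientGroup.mk' ⊥) :=
      Subgroup.mem_map.mpr ⟨y, hy, rfl⟩
    have h2 : (QuotientGroup.mk' ⊥) y ∈ Subgroup.center (G ⧸ (⊥ : Subgroup G)) := by
      rw [Subgroup.mem_center_iff]
      intro q
      obtain ⟨g, rfl⟩ := QuotientGroup.mk'_surjective ⊥ q
      rw [← map_mul, ← map_mul, hyc g]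
    have h3 : (QuotientGroup.mk' ⊥) y ∈ (paperV G (k-1)).map (QuotientGroup.mk' ⊥) := by
      rw [h0]
      exact ⟨h1, h2⟩
    obtain ⟨v, hv, hveq⟩ := Subgroup.mem_map.mp h3
    rwa [hinj hveq] at hv
  -- the subgroup of commutators with x
  have hZ : ∀ g h : G, ⁅x, g⁆ * h = h * ⁅x, g⁆ := fun g h => hGkcent ⁅x, g⁆ (hxcomm g) h
  have hmul : ∀ g h : G, ⁅x, g⁆ * ⁅x, h⁆ = ⁅x, g * h⁆ := by
    intro g h
    calc ⁅x, g⁆ * ⁅x, h⁆ = x * g * x⁻¹ * (g⁻¹ * ⁅x, h⁆) := by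
          rw [commutatorElement_def]
          group
      _ = x * g * x⁻¹ * (⁅x, h⁆ * g⁻¹) := by rw [hZ h g⁻¹]
      _ = ⁅x, g * h⁆ := by
          rw [commutatorElement_def, commutatorElement_def]
          group
  set M : Subgroup G := {
    carrier := Set.range fun g => ⁅x, g⁆
    one_mem' := ⟨1, commutatorElement_one_right x⟩
    mul_mem' := by rintro a b ⟨g, rfl⟩ ⟨h, rfl⟩; exact ⟨g * h, (hmul g h).symm⟩
    inv_mem' := by
      rintro a ⟨g, rfl⟩
      refine ⟨g⁻¹, ?_⟩
      show ⁅x, g⁻¹⁆ = ⁅x, g⁆⁻¹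
      apply eq_inv_of_mul_eq_one_left
      show ⁅x, g⁻¹⁆ * ⁅x, g⁆ = 1
      rw [hmul, inv_mul_cancel, commutatorElement_one_right]
  } with hMdef
  have hmemM : ∀ a : G, a ∈ M ↔ ∃ g : G, ⁅x, g⁆ = a := fun a => Iff.rfl
  have hMle : M ≤ paperLCS G k := by
    rintro a ⟨g, rfl⟩
    exact hxcomm g
  have hMnormal : M.Normal := by
    constructor
    intro n hn g
    have hc := hGkcent n (hMle hn) g⁻¹
    have heq : g * n * g⁻¹ = n := by
      rw [mul_assoc, hc, ← mul_assoc, mul_inv_cancel, one_mul]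
    rwa [heq]
  -- M = Gk
  have hMtop : M = paperLCS G k := by
    by_contra hne
    have hlt : M < paperLCS G k := lt_of_le_of_ne hMle hne
    have h0 := hH1 M hMnormal (hV ▸ bot_le) hlt
    letI := hMnormal
    have h1 : (QuotientGroup.mk' M) x ∈ (paperLCS G (k-1)).map (QuotientGroup.mk' M) :=
      Subgroup.mem_map.mpr ⟨x, hx, rfl⟩
    have h2 : (QuotientGroup.mk' M) x ∈ Subgroup.center (G ⧸ M) := by
      rw [Subgroup.mem_center_iff]
      intro q
      obtain ⟨g, rfl⟩ := QuotientGroup.mk'_surjective M q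
      have hcomm1 : ⁅(QuotientGroup.mk' M) x, (QuotientGroup.mk' M) g⁆ = 1 := by
        rw [← map_commutatorElement]
        exact (QuotientGroup.eq_one_iff _).mpr ⟨g, rfl⟩
      exact (commutatorElement_eq_one_iff_mul_comm.mp hcomm1).symm
    have h3 : (QuotientGroup.mk' M) x ∈ (paperV G (k-1)).map (QuotientGroup.mk' M) := by
      rw [h0]
      exact ⟨h1, h2⟩
    obtain ⟨v, hv, hveq⟩ := Subgroup.mem_map.mp h3
    -- x = v * m with m ∈ M
    have hxm : ∃ m ∈ M, x = v * m := by
      obtain ⟨m, hm, hmx⟩ := (QuotientGroup.mk'_eq_mk' M).mp hveq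
      exact ⟨m, hm, hmx.symm⟩
    obtain ⟨m, hm, hxeq⟩ := hxm
    -- x is central
    have hxc : ∀ g : G, x * g = g * x := by
      intro g
      have hvc := hVcent v hv g
      have hmc := hGkcent m (hMle hm) g
      rw [hxeq, mul_assoc, hmc, ← mul_assoc, hvc, mul_assoc]
    exact hx' (key x hx hxc)
  -- choose the witnessing commutator for z⁻¹
  have hzM : z⁻¹ ∈ M := hMtop ▸ (paperLCS G k).inv_mem hzGk
  obtain ⟨g₀, hg₀⟩ := (hmemM z⁻¹).mp hzM
  have hzeq : z = ⁅x, g₀⁆⁻¹ := by rw [hg₀, inv_inv]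
  -- Schur: z acts as a scalar
  have hzc : ∀ g : G, z * g = g * z := hGkcent z hzGk
  set endo : W ⟶ W := {
    hom := FGModuleCat.ofHom (W.ρ z)
    comm := fun g => by
      ext v
      show W.ρ z (W.ρ g v) = W.ρ g (W.ρ z v)
      rw [← Module.End.mul_apply, ← Module.End.mul_apply, ← map_mul, ← map_mul, hzc g]
  } with hendo
  obtain ⟨ω, hω⟩ := CategoryTheory.endomorphism_simple_eq_smul_id ℂ endo
  have hρz : W.ρ z = ω • (1 : (W : Type) →ₗ[ℂ] (W : Type)) := by
    have h := congrArg Action.Hom.hom hω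
    simp only [Action.smul_hom, Action.id_hom] at h
    ext v
    have h2 := congrArg (fun t : W.V ⟶ W.V => t.hom.hom v) h
    exact h2.symm
  -- characters
  have hchar_z : W.character z = ω * (finrank ℂ W : ℂ) := by
    show LinearMap.trace ℂ _ (W.ρ z) = _
    rw [hρz, map_smul, LinearMap.trace_one, smul_eq_mul]
  have hd : W.character 1 = (finrank ℂ W : ℂ) := FDRep.char_one W
  have hω1 : ω ≠ 1 := by
    intro h1
    apply hzchar
    rw [hchar_z, h1, one_mul, hd]
  -- χ(xz) = ω χ(x)
  have hxz : W.character (x * z) = ω * W.character x := by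
    have hmm : W.ρ (x * z) = ω • W.ρ x := by
      rw [map_mul, hρz, mul_smul_comm, mul_one]
    show LinearMap.trace ℂ _ (W.ρ (x * z)) = _
    rw [hmm, map_smul, smul_eq_mul]
    rfl
  -- conjugation: χ(xz) = χ(x)
  have hconj : W.character (x * z) = W.character x := by
    have h := FDRep.char_conj W x (x * g₀)
    have harg : (x * g₀) * x * (x * g₀)⁻¹ = x * z := by
      rw [hzeq, commutatorElement_def]
      group
    rwa [harg] at h
  have heq : W.character x = ω * W.character x := by rw [← hxz, hconj]
  have hzero : (1 - ω) * W.character x = 0 := by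
    rw [sub_mul, one_mul, ← heq, sub_self]
  have h1ω : (1 - ω) ≠ 0 := by
    intro h
    exact hω1 (sub_eq_zero.mp h).symm
  exact (mul_eq_zero.mp hzero).resolve_left h1ω
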